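/- Fix P₀ > 0 and P_c > 0, and suppose the quantity P_LO* = 2a₁₂P₀(a₂₃P_c + a₁₂P₀)·(√((X₀+X₂)² + 3X₂²) − X₀ − X₂)/(3a₃₄X₂²) is strictly positive. Then the DIOD thermal-noise objective g(P_LO) = P₁(P_LO)²·κ₁(P_LO)², viewed as a function of the local-oscillator power P_LO on (0, ∞), has derivative zero at P_LO = P_LO*; i.e., P_LO* is a stationary point of P₁²κ₁². -/

import Mathlib

open Set

/-- `X₁ = 2a₁₂²P₀² + 2a₁₂P₀(a₃₄P_LO + a₂₃P_c) + γ₂²a₃₄P_LO`. -/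
noncomputable def X1fun (a12 a23 a34 γ2 P0 Pc PLO : ℝ) : ℝ :=
  2 * a12 ^ 2 * P0 ^ 2 + 2 * a12 * P0 * (a34 * PLO + a23 * Pc) + γ2 ^ 2 * a34 * PLO

/-- Transmitted probe power `P₁ = P₀·exp(−X₀a₃₄P_LO/X₁)` at zero detuning. -/
noncomputable def P1fun (a12 a23 a34 γ2 X0 P0 Pc PLO : ℝ) : ℝ :=
  P0 * Real.exp (-(X0 * a34 * PLO) / X1fun a12 a23 a34 γ2 P0 Pc PLO)

/-- RF-to-optical slope `κ₁ = C₀·√(a₃₄P_LO)·a₁₂P₀·(a₂₃P_c + a₁₂P₀)/X₁²`. -/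
noncomputable def κ1fun (a12 a23 a34 γ2 C0 P0 Pc PLO : ℝ) : ℝ :=
  C0 * Real.sqrt (a34 * PLO) * (a12 * P0) * (a23 * Pc + a12 * P0)
    / (X1fun a12 a23 a34 γ2 P0 Pc PLO) ^ 2

/-- `X₂ = 2a₁₂P₀ + γ₂²`. -/
noncomputable def X2fun (a12 γ2 P0 : ℝ) : ℝ := 2 * a12 * P0 + γ2 ^ 2

/-! With `A = 2a₁₂P₀(a₂₃P_c + a₁₂P₀)`, `B = a₃₄X₂` and `c = X₀a₃₄` one has `X₁ = A + B·P_LO`, and on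
`P_LO > 0` the objective `P₁²κ₁²` is a constant multiple of `exp(-cP/(A+BP))² · P/(A+BP)⁴`. Its
derivative carries the factor `(A+BP)² - 4BP(A+BP) - 2cAP = A² - 2A(B+c)P - 3B²P²`, whose positive
root given by the quadratic formula is `P_LO*`. -/

open Real

lemma hasDerivAt_exp_sq_mul_div_pow_four {A B c x : ℝ} (hx : A + B * x ≠ 0) :
    HasDerivAt (fun P => exp (-(c * P) / (A + B * P)) ^ 2 * (P / (A + B * P) ^ 4))
      (exp (-(c * x) / (A + B * x)) ^ 2
        * ((A + B * x) ^ 2 - 4 * B * x * (A + B * x) - 2 * c * A * x) / (A + B * x) ^ 6) x := by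
  have hX : HasDerivAt (fun P => A + B * P) B x := by
    simpa using ((hasDerivAt_id x).const_mul B).const_add A
  have hexponent : HasDerivAt (fun P => -(c * P) / (A + B * P)) (-(c * A) / (A + B * x) ^ 2) x :=
    (((hasDerivAt_id x).const_mul c).fun_neg.div hX hx).congr_deriv
      (by simp only [id, mul_one]; ring)
  have hrational : HasDerivAt (fun P => P / (A + B * P) ^ 4)
      ((A + B * x - 4 * B * x) / (A + B * x) ^ 5) x :=
    ((hasDerivAt_id x).div (hX.fun_pow 4) (pow_ne_zero 4 hx)).congr_deriv
      (by simp only [id]; field_simp; ring)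
  exact ((hexponent.exp.fun_pow 2).mul hrational).congr_deriv (by field_simp; ring)

lemma stationary_numerator_eq_zero {A B c x : ℝ} (hB : B ≠ 0)
    (hx : x = A * (√((B + c) ^ 2 + 3 * B ^ 2) - (B + c)) / (3 * B ^ 2)) :
    (A + B * x) ^ 2 - 4 * B * x * (A + B * x) - 2 * c * A * x = 0 := by
  have hs : √((B + c) ^ 2 + 3 * B ^ 2) ^ 2 = (B + c) ^ 2 + 3 * B ^ 2 :=
    Real.sq_sqrt (by positivity)
  generalize √((B + c) ^ 2 + 3 * B ^ 2) = s at hs hx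
  subst hx
  field_simp
  linear_combination (-3 * A ^ 2) * hs

lemma X1fun_eq_add_mul (a12 a23 a34 γ2 P0 Pc P : ℝ) :
    X1fun a12 a23 a34 γ2 P0 Pc P
      = 2 * a12 * P0 * (a23 * Pc + a12 * P0) + a34 * X2fun a12 γ2 P0 * P := by
  unfold X1fun X2fun
  ring

lemma P1fun_sq_mul_κ1fun_sq (a12 a23 a34 γ2 X0 C0 P0 Pc : ℝ) {P : ℝ} (hP : 0 ≤ a34 * P) :
    P1fun a12 a23 a34 γ2 X0 P0 Pc P ^ 2 * κ1fun a12 a23 a34 γ2 C0 P0 Pc P ^ 2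
      = (P0 * C0 * (a12 * P0) * (a23 * Pc + a12 * P0)) ^ 2 * a34
        * (exp (-(X0 * a34 * P) / X1fun a12 a23 a34 γ2 P0 Pc P) ^ 2
          * (P / X1fun a12 a23 a34 γ2 P0 Pc P ^ 4)) := by
  simp only [P1fun, κ1fun, mul_pow, div_pow, Real.sq_sqrt hP]
  ring

lemma sqrt_stationary_discriminant (a34 X0 X2 : ℝ) (ha34 : 0 ≤ a34) :
    √((a34 * X2 + X0 * a34) ^ 2 + 3 * (a34 * X2) ^ 2)
      = a34 * √((X0 + X2) ^ 2 + 3 * X2 ^ 2) := by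
  rw [← Real.sqrt_sq ha34, ← Real.sqrt_mul (sq_nonneg a34), Real.sqrt_sq ha34]
  ring_nf

theorem diod_thermal_noise_stationary_LO_power_general
    (a12 a23 a34 γ2 X0 C0 : ℝ)
    (ha12 : 0 < a12) (ha23 : 0 < a23) (ha34 : 0 < a34)
    (P0 Pc : ℝ) (hP0 : 0 < P0) (hPc : 0 < Pc)
    (PLOstar : ℝ)
    (hPLOstar : PLOstar =
      2 * a12 * P0 * (a23 * Pc + a12 * P0)
        * (Real.sqrt ((X0 + X2fun a12 γ2 P0) ^ 2 + 3 * (X2fun a12 γ2 P0) ^ 2)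
            - X0 - X2fun a12 γ2 P0)
        / (3 * a34 * (X2fun a12 γ2 P0) ^ 2))
    (hpos : 0 < PLOstar) :
    HasDerivAt
      (fun PLO => (P1fun a12 a23 a34 γ2 X0 P0 Pc PLO) ^ 2
        * (κ1fun a12 a23 a34 γ2 C0 P0 Pc PLO) ^ 2)
      0 PLOstar := by
  have hX2 : 0 < X2fun a12 γ2 P0 := by unfold X2fun; positivity
  set A := 2 * a12 * P0 * (a23 * Pc + a12 * P0)
  set B := a34 * X2fun a12 γ2 P0
  have hB : 0 < B := by positivity
  have hstar :
      PLOstar = A * (√((B + X0 * a34) ^ 2 + 3 * B ^ 2) - (B + X0 * a34)) / (3 * B ^ 2) := by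
    rw [hPLOstar, sqrt_stationary_discriminant _ _ _ ha34.le]
    simp only [B]
    field_simp
    ring
  have hderiv := (hasDerivAt_exp_sq_mul_div_pow_four (c := X0 * a34)
    (by positivity : A + B * PLOstar ≠ 0)).const_mul
    ((P0 * C0 * (a12 * P0) * (a23 * Pc + a12 * P0)) ^ 2 * a34)
  rw [stationary_numerator_eq_zero (by positivity) hstar, mul_zero, zero_div, mul_zero] at hderiv
  refine hderiv.congr_of_eventuallyEq ?_
  filter_upwards [Ioi_mem_nhds hpos] with P hP
  rw [P1fun_sq_mul_κ1fun_sq _ _ _ _ _ _ _ _ (mul_pos ha34 hP).le, X1fun_eq_add_mul]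

theorem diod_thermal_noise_stationary_LO_power
    (a12 a23 a34 γ2 X0 C0 : ℝ)
    (ha12 : 0 < a12) (ha23 : 0 < a23) (ha34 : 0 < a34) (hγ2 : 0 < γ2)
    (hX0 : 0 < X0) (hC0 : 0 < C0)
    (P0 Pc : ℝ) (hP0 : 0 < P0) (hPc : 0 < Pc)
    (PLOstar : ℝ)
    (hPLOstar : PLOstar =
      2 * a12 * P0 * (a23 * Pc + a12 * P0)
        * (Real.sqrt ((X0 + X2fun a12 γ2 P0) ^ 2 + 3 * (X2fun a12 γ2 P0) ^ 2)
            - X0 - X2fun a12 γ2 P0)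
        / (3 * a34 * (X2fun a12 γ2 P0) ^ 2))
    (hpos : 0 < PLOstar) :
    HasDerivAt
      (fun PLO => (P1fun a12 a23 a34 γ2 X0 P0 Pc PLO) ^ 2
        * (κ1fun a12 a23 a34 γ2 C0 P0 Pc PLO) ^ 2)
      0 PLOstar :=
  diod_thermal_noise_stationary_LO_power_general a12 a23 a34 γ2 X0 C0 ha12 ha23 ha34 P0 Pc hP0 hPc
    PLOstar hPLOstar hpos
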